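/- arXiv:1306.4093 — 2 statements merged into one kernel-verified Lean document; each statement's English description precedes it below -/
import Mathlib

section
/- Let X and Y be complex Banach spaces, T ∈ L(X), C ∈ L(X,Y) surjective, B ∈ L(Y,X) injective, with T = BC, suppose T has a Moore-Penrose inverse T†, and let B† and C† denote the Moore-Penrose inverses of B and C. Then the following statements are equivalent: (i) T is EP; (ii) BB† = C†C; (iii) N(B†) = N(C); (iv) R(B) = R(C†). -/
noncomputable section

open ContinuousLinearMap

/-- An operator `H` on a complex normed space is *hermitian* if `‖exp (i t H)‖ = 1`
for all real `t`. -/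
def IsHermitianOp {X : Type*} [NormedAddCommGroup X] [NormedSpace ℂ X]
    (H : X →L[ℂ] X) : Prop :=
  ∀ t : ℝ, ‖NormedSpace.exp ((Complex.I * (t : ℂ)) • H)‖ = 1

/-- `S` is a Moore–Penrose inverse of `T`: `TST = T`, `STS = S`, and `ST`, `TS` are hermitian. -/
def IsMPInv {X Y : Type*} [NormedAddCommGroup X] [NormedSpace ℂ X]
    [NormedAddCommGroup Y] [NormedSpace ℂ Y] (T : X →L[ℂ] Y) (S : Y →L[ℂ] X) : Prop :=
  T ∘L (S ∘L T) = T ∧ S ∘L (T ∘L S) = S ∧ IsHermitianOp (S ∘L T) ∧ IsHermitianOp (T ∘L S)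

/-! A hermitian idempotent `P` satisfies `exp (iπ P) = 1 - 2P`, so the reflection `1 - 2P` is a
contraction. If hermitian idempotents `P`, `Q` have the same range, then
`(1 - 2P)(1 - 2Q) = 1 + 2(Q - P)` with `(Q - P)² = 0`, and the powers `1 + 2n(Q - P)` of this
contraction stay bounded only if `P = Q`; applied to `1 - P` and `1 - Q` the same holds for equal
kernels. So a hermitian idempotent is determined by its range, and also by its kernel.
Now `BB†` and `TT†` both have range `R(B) = R(T)`, while `C†C` and `T†T` both have kernel
`N(C) = N(T)`; hence `BB† = TT†` and `C†C = T†T`, and each of the four conditions says `BB† = C†C`.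
-/

section NormedAlgebra

variable {A : Type*} [NormedRing A] [NormedAlgebra ℝ A]

theorem eq_zero_of_mul_self_eq_zero_of_norm_one_add_le {D : A} (hD : D * D = 0)
    (h : ‖1 + D‖ ≤ 1) : D = 0 := by
  have hpow (n : ℕ) : (1 + D) ^ n = 1 + n • D := by
    induction n with
    | zero => simp
    | succ n ih =>
      rw [pow_succ, ih, add_mul, one_mul, smul_mul_assoc, mul_add, mul_one, hD, add_zero,
        succ_nsmul', add_assoc]
  have hbound (n : ℕ) : (n + 1) * ‖D‖ ≤ 1 + ‖(1 : A)‖ := by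
    calc (n + 1) * ‖D‖ = ‖(1 + D) ^ (n + 1) - 1‖ := by
          rw [hpow, add_sub_cancel_left, RCLike.norm_nsmul ℝ, nsmul_eq_mul, Nat.cast_succ]
      _ ≤ ‖1 + D‖ ^ (n + 1) + ‖(1 : A)‖ :=
          (norm_sub_le _ _).trans (add_le_add_left (norm_pow_le' _ n.succ_pos) _)
      _ ≤ 1 + ‖(1 : A)‖ := by gcongr; exact pow_le_one₀ (norm_nonneg _) h
  by_contra hne
  have hpos : 0 < ‖D‖ := norm_pos_iff.2 hne
  obtain ⟨n, hn⟩ := exists_nat_gt ((1 + ‖(1 : A)‖) / ‖D‖)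
  rw [div_lt_iff₀ hpos] at hn
  linarith [hbound n]

theorem IsIdempotentElem.eq_of_mul_eq_right {P Q : A} (hP : IsIdempotentElem P)
    (hQ : IsIdempotentElem Q) (hP₁ : ‖1 - 2 * P‖ ≤ 1) (hQ₁ : ‖1 - 2 * Q‖ ≤ 1)
    (hPQ : P * Q = Q) (hQP : Q * P = P) : P = Q := by
  have hsq : (2 * (Q - P)) * (2 * (Q - P)) = 0 := by
    calc (2 * (Q - P)) * (2 * (Q - P)) = 4 * (Q * Q - Q * P - P * Q + P * P) := by noncomm_ring
      _ = 0 := by rw [hQ.eq, hP.eq, hPQ, hQP]; noncomm_ring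
  have hreflect : (1 - 2 * P) * (1 - 2 * Q) = 1 + 2 * (Q - P) := by
    calc (1 - 2 * P) * (1 - 2 * Q) = 1 - 2 * Q - 2 * P + 4 * (P * Q) := by noncomm_ring
      _ = 1 + 2 * (Q - P) := by rw [hPQ]; noncomm_ring
  have hnorm : ‖1 + 2 * (Q - P)‖ ≤ 1 := by
    rw [← hreflect]
    exact (norm_mul_le _ _).trans (mul_le_one₀ hP₁ (norm_nonneg _) hQ₁)
  have h2 := eq_zero_of_mul_self_eq_zero_of_norm_one_add_le hsq hnorm
  rw [two_mul, ← two_smul ℝ, smul_eq_zero, sub_eq_zero] at h2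
  exact (h2.resolve_left two_ne_zero).symm

theorem IsIdempotentElem.eq_of_mul_eq_left {P Q : A} (hP : IsIdempotentElem P)
    (hQ : IsIdempotentElem Q) (hP₁ : ‖1 - 2 * P‖ ≤ 1) (hQ₁ : ‖1 - 2 * Q‖ ≤ 1)
    (hPQ : P * Q = P) (hQP : Q * P = Q) : P = Q := by
  have hcompl {R : A} (hR : ‖1 - 2 * R‖ ≤ 1) : ‖1 - 2 * (1 - R)‖ ≤ 1 := by
    rwa [show (1 : A) - 2 * (1 - R) = -(1 - 2 * R) by noncomm_ring, norm_neg]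
  refine sub_right_inj.1
    (hP.one_sub.eq_of_mul_eq_right hQ.one_sub (hcompl hP₁) (hcompl hQ₁) ?_ ?_)
  · rw [sub_mul, one_mul, mul_sub, mul_one, hPQ, sub_self, sub_zero]
  · rw [sub_mul, one_mul, mul_sub, mul_one, hQP, sub_self, sub_zero]

end NormedAlgebra

section Hermitian

theorem IsIdempotentElem.exp_smul {A : Type*} [NormedRing A] [NormedAlgebra ℂ A] {P : A}
    (hP : IsIdempotentElem P) (a : ℂ) :
    NormedSpace.exp (a • P) = 1 + (Complex.exp a - 1) • P := by
  have hterm : (fun n : ℕ => ((n.factorial : ℂ))⁻¹ • (a • P) ^ n) =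
      fun n => (((n.factorial : ℂ))⁻¹ • a ^ n) • P + if n = 0 then 1 - P else 0 := by
    funext n
    cases n with
    | zero => simp
    | succ n => simp [smul_pow, hP.pow_succ_eq, smul_smul]
  have hsum : HasSum (fun n : ℕ => ((n.factorial : ℂ))⁻¹ • (a • P) ^ n)
      (Complex.exp a • P + (1 - P)) := by
    rw [hterm, Complex.exp_eq_exp_ℂ]
    exact (NormedSpace.exp_series_hasSum_exp' a).smul_const P |>.add (hasSum_ite_eq 0 _)
  rw [NormedSpace.exp_eq_tsum ℂ]
  beta_reduce
  rw [hsum.tsum_eq]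
  module

variable {X : Type*} [NormedAddCommGroup X] [NormedSpace ℂ X]

theorem IsHermitianOp.norm_one_sub_two_mul {P : X →L[ℂ] X} (hH : IsHermitianOp P)
    (hP : IsIdempotentElem P) : ‖1 - 2 * P‖ = 1 := by
  have h := hH Real.pi
  rwa [hP.exp_smul, mul_comm, Complex.exp_pi_mul_I, show (-1 - 1 : ℂ) = -2 by norm_num, neg_smul,
    two_smul, ← two_mul, ← sub_eq_add_neg] at h

theorem IsHermitianOp.eq_iff_range_eq {P Q : X →L[ℂ] X} (hPH : IsHermitianOp P)
    (hQH : IsHermitianOp Q) (hP : IsIdempotentElem P) (hQ : IsIdempotentElem Q) :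
    P = Q ↔ LinearMap.range (P : X →ₗ[ℂ] X) = LinearMap.range (Q : X →ₗ[ℂ] X) := by
  refine ⟨fun h => h ▸ rfl, fun h => hP.eq_of_mul_eq_right hQ (hPH.norm_one_sub_two_mul hP).le
    (hQH.norm_one_sub_two_mul hQ).le ?_ ?_⟩
  · exact coe_injective ((LinearMap.IsIdempotentElem.comp_eq_right_iff hP.toLinearMap _).2 h.ge)
  · exact coe_injective ((LinearMap.IsIdempotentElem.comp_eq_right_iff hQ.toLinearMap _).2 h.le)

theorem IsHermitianOp.eq_iff_ker_eq {P Q : X →L[ℂ] X} (hPH : IsHermitianOp P)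
    (hQH : IsHermitianOp Q) (hP : IsIdempotentElem P) (hQ : IsIdempotentElem Q) :
    P = Q ↔ LinearMap.ker (P : X →ₗ[ℂ] X) = LinearMap.ker (Q : X →ₗ[ℂ] X) := by
  refine ⟨fun h => h ▸ rfl, fun h => hP.eq_of_mul_eq_left hQ (hPH.norm_one_sub_two_mul hP).le
    (hQH.norm_one_sub_two_mul hQ).le ?_ ?_⟩
  · exact coe_injective ((LinearMap.IsIdempotentElem.comp_eq_left_iff hQ.toLinearMap _).2 h.ge)
  · exact coe_injective ((LinearMap.IsIdempotentElem.comp_eq_left_iff hP.toLinearMap _).2 h.le)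

end Hermitian

namespace IsMPInv

variable {X Y : Type*} [NormedAddCommGroup X] [NormedSpace ℂ X]
  [NormedAddCommGroup Y] [NormedSpace ℂ Y] {T : X →L[ℂ] Y} {S : Y →L[ℂ] X}

theorem symm (h : IsMPInv T S) : IsMPInv S T :=
  ⟨h.2.1, h.1, h.2.2.2, h.2.2.1⟩

theorem isIdempotentElem_comp (h : IsMPInv T S) : IsIdempotentElem (T ∘L S) := by
  change (T ∘L S) ∘L (T ∘L S) = T ∘L S
  rw [comp_assoc, h.2.1]

theorem range_comp (h : IsMPInv T S) :
    LinearMap.range ((T ∘L S : Y →L[ℂ] Y) : Y →ₗ[ℂ] Y) = LinearMap.range (T : X →ₗ[ℂ] Y) := by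
  refine le_antisymm (LinearMap.range_comp_le_range _ _) ?_
  rintro _ ⟨x, rfl⟩
  exact ⟨T x, DFunLike.congr_fun h.1 x⟩

theorem ker_comp (h : IsMPInv T S) :
    LinearMap.ker ((T ∘L S : Y →L[ℂ] Y) : Y →ₗ[ℂ] Y) = LinearMap.ker (S : Y →ₗ[ℂ] X) := by
  refine le_antisymm ?_ (LinearMap.ker_le_ker_comp _ _)
  intro y (hy : T (S y) = 0)
  change S y = 0
  rw [← DFunLike.congr_fun h.2.1 y]
  exact (congrArg S hy).trans (map_zero S)

theorem comp_eq_comp_iff_range_eq {X' : Type*} [NormedAddCommGroup X'] [NormedSpace ℂ X']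
    {T' : X' →L[ℂ] Y} {S' : Y →L[ℂ] X'} (h : IsMPInv T S) (h' : IsMPInv T' S') :
    T ∘L S = T' ∘L S' ↔ LinearMap.range (T : X →ₗ[ℂ] Y) = LinearMap.range (T' : X' →ₗ[ℂ] Y) := by
  rw [h.2.2.2.eq_iff_range_eq h'.2.2.2 h.isIdempotentElem_comp h'.isIdempotentElem_comp,
    h.range_comp, h'.range_comp]

theorem comp_eq_comp_iff_ker_eq {X' : Type*} [NormedAddCommGroup X'] [NormedSpace ℂ X']
    {T' : X' →L[ℂ] Y} {S' : Y →L[ℂ] X'} (h : IsMPInv T S) (h' : IsMPInv T' S') :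
    T ∘L S = T' ∘L S' ↔ LinearMap.ker (S : Y →ₗ[ℂ] X) = LinearMap.ker (S' : Y →ₗ[ℂ] X') := by
  rw [h.2.2.2.eq_iff_ker_eq h'.2.2.2 h.isIdempotentElem_comp h'.isIdempotentElem_comp,
    h.ker_comp, h'.ker_comp]

end IsMPInv

theorem ep_tfae_of_factorization_general {X Y : Type*}
    [NormedAddCommGroup X] [NormedSpace ℂ X]
    [NormedAddCommGroup Y] [NormedSpace ℂ Y]
    (T : X →L[ℂ] X) (C : X →L[ℂ] Y) (B : Y →L[ℂ] X)
    (hC : Function.Surjective C) (hB : Function.Injective B) (hT : T = B ∘L C)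
    (Td : X →L[ℂ] X) (Bd : X →L[ℂ] Y) (Cd : Y →L[ℂ] X)
    (hTd : IsMPInv T Td) (hBd : IsMPInv B Bd) (hCd : IsMPInv C Cd) :
    List.TFAE
      [T ∘L Td = Td ∘L T,
       B ∘L Bd = Cd ∘L C,
       LinearMap.ker (Bd : X →ₗ[ℂ] Y) = LinearMap.ker (C : X →ₗ[ℂ] Y),
       LinearMap.range (B : Y →ₗ[ℂ] X) = LinearMap.range (Cd : Y →ₗ[ℂ] X)] := by
  have hBT : B ∘L Bd = T ∘L Td := by
    rw [hBd.comp_eq_comp_iff_range_eq hTd, hT, toLinearMap_comp,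
      LinearMap.range_comp_of_range_eq_top _ (LinearMap.range_eq_top.2 hC)]
  have hCT : Cd ∘L C = Td ∘L T := by
    rw [hCd.symm.comp_eq_comp_iff_ker_eq hTd.symm, hT, toLinearMap_comp,
      LinearMap.ker_comp_of_ker_eq_bot _ (LinearMap.ker_eq_bot.2 hB)]
  tfae_have 1 ↔ 2 := by rw [hBT, hCT]
  tfae_have 2 ↔ 3 := hBd.comp_eq_comp_iff_ker_eq hCd.symm
  tfae_have 2 ↔ 4 := hBd.comp_eq_comp_iff_range_eq hCd.symm
  tfae_finish

/-- For `T = BC` with `C` surjective, `B` injective, and Moore–Penrose inverses `T†`, `B†`,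
`C†`: `T` is EP iff `BB† = C†C` iff `N(B†) = N(C)` iff `R(B) = R(C†)`. -/
theorem ep_tfae_of_factorization {X Y : Type*}
    [NormedAddCommGroup X] [NormedSpace ℂ X] [CompleteSpace X]
    [NormedAddCommGroup Y] [NormedSpace ℂ Y] [CompleteSpace Y]
    (T : X →L[ℂ] X) (C : X →L[ℂ] Y) (B : Y →L[ℂ] X)
    (hC : Function.Surjective C) (hB : Function.Injective B) (hT : T = B ∘L C)
    (Td : X →L[ℂ] X) (Bd : X →L[ℂ] Y) (Cd : Y →L[ℂ] X)
    (hTd : IsMPInv T Td) (hBd : IsMPInv B Bd) (hCd : IsMPInv C Cd) :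
    List.TFAE
      [T ∘L Td = Td ∘L T,
       B ∘L Bd = Cd ∘L C,
       LinearMap.ker (Bd : X →ₗ[ℂ] Y) = LinearMap.ker (C : X →ₗ[ℂ] Y),
       LinearMap.range (B : Y →ₗ[ℂ] X) = LinearMap.range (Cd : Y →ₗ[ℂ] X)] :=
  ep_tfae_of_factorization_general T C B hC hB hT Td Bd Cd hTd hBd hCd
end
end

section
/- Let A be a unital C*-algebra with unit e and let a, b, c ∈ A be such that a has a Moore-Penrose inverse a†, a = bc, b⁻¹(0) = 0, and cA = A; let b† and c† denote the Moore-Penrose inverses of b and c. Then the following statements are equivalent: (i) a is EP; (ii) a*a = c*b*bcbb† and a*a = c*b*c†cbc; (iii) aa* = bcc*b*c*((c†)*) [i.e. aa* = bcc*b*c*(c*)† where (c*)† = (c†)*] and aa* = bcbb†c*b*; (iv) a*a = c*b*bcbb† and aa* = bcc*b*c*(c†)*. -/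
/-!
Since `b` is left cancellable and `c` is right invertible, `b†b = e` and `cc† = e`, so `c†b†` is the
Moore–Penrose inverse of `a = bc`; hence `aa† = bb†` and `a†a = c†c`. Then `a` is EP iff
`a = a (bb†)` and `a = (c†c) a`, and each identity in (ii)–(iv) is one of these two range
conditions in disguise: in a C*-algebra `x*x = x*x p` forces `x = x p` for self-adjoint `p`,
because it makes `(x - x p)*(x - x p)` vanish.
-/

noncomputable section

/-- `x` is a Moore–Penrose inverse of `a` in a C*-algebra: `axa = a`, `xax = x`, and
`ax`, `xa` are self-adjoint. -/
def IsMPInvStar {A : Type*} [Ring A] [StarRing A] (a x : A) : Prop :=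
  a * x * a = a ∧ x * a * x = x ∧ IsSelfAdjoint (a * x) ∧ IsSelfAdjoint (x * a)

variable {A : Type*} [NormedRing A] [StarRing A] [CStarRing A] [CompleteSpace A]
  [NormedAlgebra ℂ A] [StarModule ℂ A]

section InnerInverse

variable {M : Type*} [Monoid M] {b b' c c' : M}

theorem mul_eq_one_of_mul_mul_eq_of_isLeftRegular (hb : b * b' * b = b) (hreg : IsLeftRegular b) :
    b' * b = 1 :=
  hreg (show b * (b' * b) = b * 1 by rw [← mul_assoc, hb, mul_one])

theorem mul_eq_one_of_mul_mul_eq_of_mul_eq_one {x : M} (hc : c * c' * c = c) (hx : c * x = 1) :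
    c * c' = 1 := by
  rw [← mul_one (c * c'), ← hx, ← mul_assoc, hc]

end InnerInverse

theorem mul_comm_iff_of_mul_mul_eq {S : Type*} [Semigroup S] {a x : S} (h : a * x * a = a) :
    a * x = x * a ↔ a = a * (a * x) ∧ a = x * a * a := by
  constructor
  · intro hax
    constructor
    · rw [hax, ← mul_assoc, h]
    · rw [← hax, h]
  · rintro ⟨hr, hl⟩
    calc a * x = x * a * a * x := by rw [← hl]
      _ = x * (a * (a * x)) := by simp only [mul_assoc]
      _ = x * a := by rw [← hr]

namespace IsMPInvStar

variable {R : Type*} [Ring R] [StarRing R] {a b c x y : R}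

theorem isStarProjection_self_mul (h : IsMPInvStar a x) : IsStarProjection (a * x) :=
  ⟨by rw [IsIdempotentElem, ← mul_assoc, h.1], h.2.2.1⟩

theorem isStarProjection_mul_self (h : IsMPInvStar a x) : IsStarProjection (x * a) :=
  ⟨by rw [IsIdempotentElem, ← mul_assoc, h.2.1], h.2.2.2⟩

theorem unique (hx : IsMPInvStar a x) (hy : IsMPInvStar a y) : x = y := by
  obtain ⟨hx1, hx2, hx3, hx4⟩ := hx
  obtain ⟨hy1, hy2, hy3, hy4⟩ := hy
  have hxay : x = x * a * y := calc
    x = x * star (a * x) := by rw [hx3.star_eq, ← mul_assoc, hx2]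
    _ = x * star (a * y * a * x) := by rw [hy1]
    _ = x * star (a * x) * star (a * y) := by simp only [star_mul, mul_assoc]
    _ = x * a * y := by rw [hx3.star_eq, hy3.star_eq, ← mul_assoc x, hx2, mul_assoc x a y]
  have hyay : y = x * a * y := calc
    y = star (y * a) * y := by rw [hy4.star_eq, hy2]
    _ = star (y * (a * x * a)) * y := by rw [hx1]
    _ = star (x * a) * star (y * a) * y := by simp only [star_mul, mul_assoc]
    _ = x * a * y := by rw [hx4.star_eq, hy4.star_eq, mul_assoc, hy2]
  rw [hxay, ← hyay]

theorem mul {b' c' : R} (hb : IsMPInvStar b b') (hc : IsMPInvStar c c') (hbb : b' * b = 1)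
    (hcc : c * c' = 1) : IsMPInvStar (b * c) (c' * b') := by
  have hl : b * c * (c' * b') = b * b' := by rw [mul_assoc, ← mul_assoc c, hcc, one_mul]
  have hr : c' * b' * (b * c) = c' * c := by rw [mul_assoc, ← mul_assoc b', hbb, one_mul]
  refine ⟨?_, ?_, ?_, ?_⟩
  · rw [hl, mul_assoc, ← mul_assoc b', hbb, one_mul]
  · rw [hr, mul_assoc, ← mul_assoc c, hcc, one_mul]
  · rw [hl]; exact hb.2.2.1
  · rw [hr]; exact hc.2.2.2

end IsMPInvStar

section CStarRing

variable {E : Type*} [NonUnitalNormedRing E] [StarRing E] [CStarRing E] {x p : E}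

theorem star_mul_self_eq_mul_iff (hp : IsSelfAdjoint p) :
    star x * x = star x * x * p ↔ x = x * p := by
  refine ⟨fun h => ?_, fun h => by rw [mul_assoc, ← h]⟩
  have : star (x - x * p) * (x - x * p) = 0 := calc
    star (x - x * p) * (x - x * p)
        = (star x * x - star x * x * p) - p * (star x * x - star x * x * p) := by
      simp only [star_sub, star_mul, hp.star_eq, sub_mul, mul_sub, mul_assoc]; abel
    _ = 0 := by rw [← h, sub_self, mul_zero, sub_zero]
  exact sub_eq_zero.mp ((CStarRing.star_mul_self_eq_zero_iff _).mp this)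

theorem star_mul_self_eq_mul_mul_iff (hp : IsStarProjection p) :
    star x * x = star x * p * x ↔ x = p * x := by
  refine ⟨fun h => ?_, fun h => by rw [mul_assoc, ← h]⟩
  have : star (x - p * x) * (x - p * x) = 0 := calc
    star (x - p * x) * (x - p * x) = star x * x - star x * p * x := by
      simp only [star_sub, star_mul, hp.isSelfAdjoint.star_eq, sub_mul, mul_sub, mul_assoc,
        ← mul_assoc p p, hp.isIdempotentElem.eq]
      abel
    _ = 0 := by rw [← h, sub_self]
  exact sub_eq_zero.mp ((CStarRing.star_mul_self_eq_zero_iff _).mp this)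

theorem mul_star_self_eq_mul_iff (hp : IsSelfAdjoint p) :
    x * star x = x * star x * p ↔ x = p * x := by
  have h := star_mul_self_eq_mul_iff (x := star x) hp
  rw [star_star] at h
  rw [h, ← star_inj, star_mul, star_star, hp.star_eq]

theorem mul_star_self_eq_mul_mul_iff (hp : IsStarProjection p) :
    x * star x = x * p * star x ↔ x = x * p := by
  have h := star_mul_self_eq_mul_mul_iff (x := star x) hp
  rw [star_star] at h
  rw [h, ← star_inj, star_mul, star_star, hp.isSelfAdjoint.star_eq]

end CStarRing

/-- If `a = bc` with `b⁻¹(0) = 0`, `cA = A` and Moore–Penrose inverses `a†`, `b†`, `c†`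
in a unital C*-algebra (so `(c*)† = (c†)*`), then `a` is EP iff any of the displayed pairs
of identities holds. -/
theorem ep_tfae_star_products (a b c ad bd cd : A)
    (had : IsMPInvStar a ad) (hbd : IsMPInvStar b bd) (hcd : IsMPInvStar c cd)
    (habc : a = b * c)
    (hb : {x : A | b * x = 0} = {0}) (hc : {y : A | ∃ x, y = c * x} = Set.univ) :
    List.TFAE
      [a * ad = ad * a,
       star a * a = star c * star b * b * c * b * bd ∧
         star a * a = star c * star b * cd * c * b * c,
       a * star a = b * c * star c * star b * star c * star cd ∧
         a * star a = b * c * b * bd * star c * star b,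
       star a * a = star c * star b * b * c * b * bd ∧
         a * star a = b * c * star c * star b * star c * star cd] := by
  have hbdb : bd * b = 1 := mul_eq_one_of_mul_mul_eq_of_isLeftRegular hbd.1 <|
    isLeftRegular_iff_right_eq_zero_of_mul.mpr fun x hx => (Set.ext_iff.mp hb x).mp hx
  obtain ⟨x, hx⟩ : ∃ x, 1 = c * x := (Set.ext_iff.mp hc 1).mpr trivial
  have hccd : c * cd = 1 := mul_eq_one_of_mul_mul_eq_of_mul_eq_one hcd.1 hx.symm
  have had' : ad = cd * bd := had.unique (habc ▸ hbd.mul hcd hbdb hccd)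
  have hP : a * ad = b * bd := by rw [had', habc, mul_assoc, ← mul_assoc c, hccd, one_mul]
  have hQ : ad * a = cd * c := by rw [had', habc, mul_assoc, ← mul_assoc bd, hbdb, one_mul]
  have hEP : a * ad = ad * a ↔ a = a * (b * bd) ∧ a = cd * c * a := by
    rw [mul_comm_iff_of_mul_mul_eq had.1, hP, hQ]
  have h2a := star_mul_self_eq_mul_iff (x := a) hbd.isStarProjection_self_mul.isSelfAdjoint
  have h2b := star_mul_self_eq_mul_mul_iff (x := a) hcd.isStarProjection_mul_self
  have h3a := mul_star_self_eq_mul_iff (x := a) hcd.isStarProjection_mul_self.isSelfAdjoint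
  have h3b := mul_star_self_eq_mul_mul_iff (x := a) hbd.isStarProjection_self_mul
  have hcdc : star c * star cd = cd * c := by rw [← star_mul, hcd.2.2.2.star_eq]
  simp only [habc, star_mul, mul_assoc, hcdc] at h2a h2b h3a h3b hEP ⊢
  tfae_have 1 ↔ 2 := hEP.trans (and_congr h2a h2b).symm
  tfae_have 1 ↔ 3 := hEP.trans ((and_congr h3a h3b).trans and_comm).symm
  tfae_have 1 ↔ 4 := hEP.trans (and_congr h2a h3a).symm
  tfae_finish
end
end
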